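/- For p₁, p₂ ∈ [0,1], let K^{p₁,p₂}_{Choi} denote the Choi operator of the KPF16 channel, namely the matrix on (ℂ²)^{⊗4} with tensor factors ordered Q_A, C_A, C_B, Q_B given by Σ_{i,j,k,l∈{0,1}} |i⟩⟨j|_{Q_A} ⊗ K^{p₁,p₂}(|i⟩⟨j|⊗|k⟩⟨l|)_{C_A C_B} ⊗ |k⟩⟨l|_{Q_B}. Then Tr[(Φ_{Q_A C_B}⊗Φ_{C_A Q_B})·(1/4)·K^{p₁,p₂}_{Choi}] = (1/16)·(1 + 3(p₁+p₂) − 6p₁p₂), where Φ_{Q_A C_B} and Φ_{C_A Q_B} denote qubit maximally entangled states placed on the indicated pairs of tensor factors; this quantity is the fidelity between the Choi state of the KPF16 protocol and the Choi state of ideal bidirectional teleportation. -/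

import Mathlib

open Matrix Kronecker
open scoped ComplexOrder

noncomputable section

/-- Square root of a positive semidefinite matrix, as `Matrix.PosSemidef.sqrt` was defined in
older Mathlib (since removed): `U diag(√λ) U*` from the spectral decomposition. -/
def psdSqrt {n : Type*} [Fintype n] [DecidableEq n] {A : Matrix n n ℂ} (hA : A.PosSemidef) :
    Matrix n n ℂ :=
  hA.1.eigenvectorUnitary.1 * Matrix.diagonal ((↑) ∘ fun i => Real.sqrt (hA.1.eigenvalues i)) *
    (star hA.1.eigenvectorUnitary : Matrix n n ℂ)

/-- The trace norm `‖X‖₁ = Tr[√(X†X)]`. -/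
def traceNorm {n : Type*} [Fintype n] [DecidableEq n] (X : Matrix n n ℂ) : ℝ :=
  ((psdSqrt (Matrix.posSemidef_conjTranspose_mul_self X)).trace).re

/-- The extension `id_k ⊗ Φ` of a map on matrices, with the identity on the first factor. -/
def idTensor {k n m : Type*} (Φ : Matrix n n ℂ → Matrix m m ℂ)
    (M : Matrix (k × n) (k × n) ℂ) : Matrix (k × m) (k × m) ℂ :=
  Matrix.of fun p q => Φ (Matrix.of fun a b => M (p.1, a) (q.1, b)) p.2 q.2

/-- A density matrix: positive semidefinite with unit trace. -/
def IsState {n : Type*} [Fintype n] (ρ : Matrix n n ℂ) : Prop :=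
  ρ.PosSemidef ∧ ρ.trace = 1

/-- Normalized diamond distance between two maps on matrices, as the supremum over
bipartite input states (with a reference system of the same dimension as the input)
of the normalized trace distance of the outputs. -/
def dDist {n m : Type*} [Fintype n] [DecidableEq n] [Fintype m] [DecidableEq m]
    (N M : Matrix n n ℂ → Matrix m m ℂ) : ℝ :=
  sSup {x : ℝ | ∃ ρ : Matrix (n × n) (n × n) ℂ, IsState ρ ∧
    x = (1 / 2) * traceNorm (idTensor N ρ - idTensor M ρ)}

/-- Complete positivity of a linear map on matrices: every finite identity extension
preserves positive semidefiniteness. -/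
def IsCP {n m : Type*} [Fintype n] [DecidableEq n] [Fintype m] [DecidableEq m]
    (Φ : Matrix n n ℂ →ₗ[ℂ] Matrix m m ℂ) : Prop :=
  ∀ (r : ℕ) (M : Matrix (Fin r × n) (Fin r × n) ℂ), M.PosSemidef →
    (idTensor (fun X => Φ X) M).PosSemidef

/-- Trace preservation of a linear map on matrices. -/
def IsTP {n m : Type*} [Fintype n] [Fintype m]
    (Φ : Matrix n n ℂ →ₗ[ℂ] Matrix m m ℂ) : Prop :=
  ∀ X, (Φ X).trace = X.trace

/-- Choi operator of a map on matrices: `Γ^Φ = Σ_{i,j} |i⟩⟨j| ⊗ Φ(|i⟩⟨j|)`. -/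
def choi {n m : Type*} [DecidableEq n]
    (Φ : Matrix n n ℂ → Matrix m m ℂ) : Matrix (n × m) (n × m) ℂ :=
  Matrix.of fun p q => Φ (Matrix.single p.1 q.1 1) p.2 q.2

/-- The swap operator `F = Σ_{i,j} |i⟩⟨j| ⊗ |j⟩⟨i|` on `ℂ^d ⊗ ℂ^d`. -/
def swapOp (d : ℕ) : Matrix (Fin d × Fin d) (Fin d × Fin d) ℂ :=
  Matrix.of fun p q => if p.1 = q.2 ∧ p.2 = q.1 then 1 else 0

/-- The swap channel `S^d(X) = F X F†`. -/
def swapCh (d : ℕ) (X : Matrix (Fin d × Fin d) (Fin d × Fin d) ℂ) :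
    Matrix (Fin d × Fin d) (Fin d × Fin d) ℂ :=
  swapOp d * X * (swapOp d)ᴴ

/-- Square root of a positive semidefinite matrix (junk value `0` otherwise). -/
def msqrt {n : Type*} [Fintype n] [DecidableEq n] (X : Matrix n n ℂ) : Matrix n n ℂ :=
  letI := Classical.propDecidable X.PosSemidef
  if h : X.PosSemidef then psdSqrt h else 0

/-- Fidelity `F(ω,τ) = ‖√ω √τ‖₁²`. -/
def fid {n : Type*} [Fintype n] [DecidableEq n] (ω τ : Matrix n n ℂ) : ℝ :=
  (traceNorm (msqrt ω * msqrt τ)) ^ 2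

/-- Channel fidelity: the infimum of output fidelities over bipartite input states. -/
def cFid {n m : Type*} [Fintype n] [DecidableEq n] [Fintype m] [DecidableEq m]
    (N M : Matrix n n ℂ → Matrix m m ℂ) : ℝ :=
  sInf {x : ℝ | ∃ ρ : Matrix (n × n) (n × n) ℂ, IsState ρ ∧
    x = fid (idTensor N ρ) (idTensor M ρ)}

/-- Partial trace over the second (right) factor. -/
def ptrR {a b : Type*} [Fintype b] (X : Matrix (a × b) (a × b) ℂ) : Matrix a a ℂ :=
  Matrix.of fun i j => ∑ k, X (i, k) (j, k)

/-- Unnormalized maximally entangled operator `Γ = |Γ⟩⟨Γ|` on `ℂ^D ⊗ ℂ^D`. -/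
def gamOp (D : ℕ) : Matrix (Fin D × Fin D) (Fin D × Fin D) ℂ :=
  Matrix.of fun p q => if p.1 = p.2 ∧ q.1 = q.2 then 1 else 0

/-- Maximally entangled state `Φ = Γ/D` on `ℂ^D ⊗ ℂ^D`. -/
def phiD (D : ℕ) : Matrix (Fin D × Fin D) (Fin D × Fin D) ℂ :=
  ((D : ℂ))⁻¹ • gamOp D

/-- Partial transpose over Bob's factors `B, B̂, B'` of a matrix on the six factors
`(A ⊗ B) ⊗ (Â ⊗ B̂) ⊗ (A' ⊗ B')`. -/
def ptB6 {A B AH BH A' B' : Type*}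
    (X : Matrix (((A × B) × (AH × BH)) × (A' × B')) (((A × B) × (AH × BH)) × (A' × B')) ℂ) :
    Matrix (((A × B) × (AH × BH)) × (A' × B')) (((A × B) × (AH × BH)) × (A' × B')) ℂ :=
  Matrix.of fun p q =>
    X (((p.1.1.1, q.1.1.2), (p.1.2.1, q.1.2.2)), (p.2.1, q.2.2))
      (((q.1.1.1, p.1.1.2), (q.1.2.1, p.1.2.2)), (q.2.1, p.2.2))

/-- Partial transpose over the factor `B̂` of a matrix on `Â ⊗ B̂`. -/
def ptBh2 {AH BH : Type*} (X : Matrix (AH × BH) (AH × BH) ℂ) : Matrix (AH × BH) (AH × BH) ℂ :=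
  Matrix.of fun g g' => X (g.1, g'.2) (g'.1, g.2)

/-- Contraction `Tr_{ÂB̂}[(T_{ÂB̂}(ρ) ⊗ I) P]` of a six-factor operator with a resource state,
yielding the Choi operator of the induced channel `ω ↦ P(ω ⊗ ρ)`. -/
def contractRes {A B AH BH A' B' : Type*} [Fintype AH] [Fintype BH]
    (ρ : Matrix (AH × BH) (AH × BH) ℂ)
    (P : Matrix (((A × B) × (AH × BH)) × (A' × B')) (((A × B) × (AH × BH)) × (A' × B')) ℂ) :
    Matrix ((A × B) × (A' × B')) ((A × B) × (A' × B')) ℂ :=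
  Matrix.of fun p q => ∑ h, ∑ h', ρ h h' * P ((p.1, h), p.2) ((q.1, h'), q.2)


/-- The maximally mixed qubit state `π = I/2`. -/
def piq : Matrix (Fin 2) (Fin 2) ℂ := (2 : ℂ)⁻¹ • 1

/-- The qubit maximally entangled state `Φ = Γ/2`. -/
def phiQ : Matrix (Fin 2 × Fin 2) (Fin 2 × Fin 2) ℂ := (2 : ℂ)⁻¹ • gamOp 2

/-- Partial trace over the first qubit factor. -/
def ptrFst (X : Matrix (Fin 2 × Fin 2) (Fin 2 × Fin 2) ℂ) : Matrix (Fin 2) (Fin 2) ℂ :=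
  Matrix.of fun j j' => ∑ i, X (i, j) (i, j')

/-- Partial trace over the second qubit factor. -/
def ptrSnd (X : Matrix (Fin 2 × Fin 2) (Fin 2 × Fin 2) ℂ) : Matrix (Fin 2) (Fin 2) ℂ :=
  Matrix.of fun i i' => ∑ j, X (i, j) (i', j)

/-- The first KPF16 bipartite channel with trigger probabilities `p₁, p₂`: the linear
extension of `X ⊗ Y ↦ (1−p₁)(1−p₂)·Tr[X]Tr[Y]·Φ + (1−p₁)p₂·Y ⊗ (Tr[X]·π)
+ p₁(1−p₂)·(Tr[Y]·π) ⊗ X + p₁p₂·Tr[X]Tr[Y]·π⊗π`. -/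
def kpfCh (p₁ p₂ : ℝ) (ρ : Matrix (Fin 2 × Fin 2) (Fin 2 × Fin 2) ℂ) :
    Matrix (Fin 2 × Fin 2) (Fin 2 × Fin 2) ℂ :=
  (((1 - p₁) * (1 - p₂) : ℝ) : ℂ) • ρ.trace • phiQ
    + (((1 - p₁) * p₂ : ℝ) : ℂ) • (ptrFst ρ ⊗ₖ piq)
    + ((p₁ * (1 - p₂) : ℝ) : ℂ) • (piq ⊗ₖ ptrSnd ρ)
    + ((p₁ * p₂ : ℝ) : ℂ) • ρ.trace • (piq ⊗ₖ piq)

/-- The Choi operator of the KPF16 channel, with tensor factors ordered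
`Q_A, C_A, C_B, Q_B`. -/
def kpfChoi (p₁ p₂ : ℝ) :
    Matrix (Fin 2 × ((Fin 2 × Fin 2) × Fin 2)) (Fin 2 × ((Fin 2 × Fin 2) × Fin 2)) ℂ :=
  ∑ i : Fin 2, ∑ j : Fin 2, ∑ k : Fin 2, ∑ l : Fin 2,
    (Matrix.single i j (1 : ℂ)) ⊗ₖ
      ((kpfCh p₁ p₂ ((Matrix.single i j (1 : ℂ)) ⊗ₖ (Matrix.single k l (1 : ℂ)))) ⊗ₖ
        (Matrix.single k l (1 : ℂ)))

/-- The Choi state of ideal bidirectional teleportation: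
`Ψ = Φ_{Q_A C_B} ⊗ Φ_{C_A Q_B}` on factors ordered `Q_A, C_A, C_B, Q_B`. -/
def psiOp : Matrix (Fin 2 × ((Fin 2 × Fin 2) × Fin 2)) (Fin 2 × ((Fin 2 × Fin 2) × Fin 2)) ℂ :=
  Matrix.of fun r c =>
    phiQ (r.1, r.2.1.2) (c.1, c.2.1.2) * phiQ (r.2.1.1, r.2.2) (c.2.1.1, c.2.2)

/-!
Both `Ψ` and the Choi operator are assembled from matrix units, so `Tr[Ψ · Choi(N)]` only sees
the entries `N(|j⟩⟨i| ⊗ |l⟩⟨k|)_{(l,j),(k,i)}`: the matrix elements by which `N` would carry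
`Q_A` to `C_B` and `Q_B` to `C_A`. On product inputs the KPF16 channel is a mixture of four
branches. The two branches that forward one register and replace the other by `π` each
contribute `1/4`; the two that discard both inputs contribute `1/16`. Hence the fidelity is
`(1-p₁)(1-p₂)/16 + ((1-p₁)p₂ + p₁(1-p₂))/4 + p₁p₂/16`.
-/

section BipartiteChoi

variable {a b c d : Type*} [Fintype a] [DecidableEq a] [Fintype b] [DecidableEq b]

def bipartiteChoi (N : Matrix (a × b) (a × b) ℂ → Matrix (c × d) (c × d) ℂ) :
    Matrix (a × ((c × d) × b)) (a × ((c × d) × b)) ℂ :=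
  ∑ i : a, ∑ j : a, ∑ k : b, ∑ l : b,
    single i j (1 : ℂ) ⊗ₖ (N (single i j (1 : ℂ) ⊗ₖ single k l (1 : ℂ)) ⊗ₖ single k l (1 : ℂ))

theorem bipartiteChoi_apply (N : Matrix (a × b) (a × b) ℂ → Matrix (c × d) (c × d) ℂ)
    (r s : a × ((c × d) × b)) :
    bipartiteChoi N r s = N (single r.1 s.1 1 ⊗ₖ single r.2.2 s.2.2 1) r.2.1 s.2.1 := by
  simp only [bipartiteChoi, Matrix.sum_apply, kroneckerMap_apply, single_apply, ite_and, ite_mul,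
    one_mul, zero_mul, mul_one, mul_ite, mul_zero, Finset.sum_ite_irrel, Finset.sum_ite_eq',
    Finset.mem_univ, ↓reduceIte, Finset.sum_const_zero]

end BipartiteChoi

theorem kpfChoi_eq_bipartiteChoi (p₁ p₂ : ℝ) : kpfChoi p₁ p₂ = bipartiteChoi (kpfCh p₁ p₂) := rfl

theorem ptrFst_kronecker (X Y : Matrix (Fin 2) (Fin 2) ℂ) : ptrFst (X ⊗ₖ Y) = X.trace • Y := by
  ext
  simp only [ptrFst, trace, diag, of_apply, kroneckerMap_apply, Matrix.smul_apply, smul_eq_mul,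
    Finset.sum_mul]

theorem ptrSnd_kronecker (X Y : Matrix (Fin 2) (Fin 2) ℂ) : ptrSnd (X ⊗ₖ Y) = Y.trace • X := by
  ext
  simp only [ptrSnd, trace, diag, of_apply, kroneckerMap_apply, Matrix.smul_apply, smul_eq_mul,
    Finset.sum_mul]
  exact Finset.sum_congr rfl fun _ _ => mul_comm _ _

theorem kpfCh_kronecker (p₁ p₂ : ℝ) (X Y : Matrix (Fin 2) (Fin 2) ℂ) :
    kpfCh p₁ p₂ (X ⊗ₖ Y)
      = (((1 - p₁) * (1 - p₂) : ℝ) : ℂ) • (X.trace * Y.trace) • phiQ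
        + (((1 - p₁) * p₂ : ℝ) : ℂ) • (Y ⊗ₖ (X.trace • piq))
        + ((p₁ * (1 - p₂) : ℝ) : ℂ) • ((Y.trace • piq) ⊗ₖ X)
        + ((p₁ * p₂ : ℝ) : ℂ) • (X.trace * Y.trace) • (piq ⊗ₖ piq) := by
  simp only [kpfCh, trace_kronecker, ptrFst_kronecker, ptrSnd_kronecker, smul_kronecker,
    kronecker_smul]

theorem trace_psiOp_mul_bipartiteChoi
    (N : Matrix (Fin 2 × Fin 2) (Fin 2 × Fin 2) ℂ → Matrix (Fin 2 × Fin 2) (Fin 2 × Fin 2) ℂ) :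
    (psiOp * bipartiteChoi N).trace
      = 4⁻¹ * ∑ i, ∑ j, ∑ k, ∑ l, N (single j i 1 ⊗ₖ single l k 1) (l, j) (k, i) := by
  simp only [trace, diag, mul_apply, bipartiteChoi_apply, psiOp, phiQ, gamOp, Matrix.smul_apply,
    of_apply, Fintype.sum_prod_type, ite_and, smul_eq_mul, mul_ite, mul_one, mul_zero, ite_mul,
    zero_mul, Finset.sum_ite_irrel, Finset.sum_ite_eq, Finset.mem_univ, ↓reduceIte,
    Finset.sum_const_zero, Fin.sum_univ_two]
  ring

theorem stmt14_general (p₁ p₂ : ℝ) :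
    (psiOp * ((4 : ℂ)⁻¹ • kpfChoi p₁ p₂)).trace
      = (((1 / 16) * (1 + 3 * (p₁ + p₂) - 6 * p₁ * p₂) : ℝ) : ℂ) := by
  rw [kpfChoi_eq_bipartiteChoi, mul_smul_comm, trace_smul, trace_psiOp_mul_bipartiteChoi]
  simp only [kpfCh_kronecker, Matrix.add_apply, Matrix.smul_apply, kroneckerMap_apply, phiQ, gamOp,
    piq, one_apply, of_apply, single_apply, trace, diag_apply, Fin.sum_univ_two, Fin.isValue,
    smul_eq_mul, mul_ite, mul_one, mul_zero, ite_mul, one_mul, zero_mul, and_self, true_and,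
    false_and, ↓reduceIte, zero_ne_one, one_ne_zero, add_zero, zero_add]
  push_cast
  ring

/-- the fidelity between the Choi state of the KPF16 protocol and the Choi
state of ideal bidirectional teleportation equals `(1/16)(1 + 3(p₁+p₂) − 6p₁p₂)`. -/
theorem stmt14 (p₁ p₂ : ℝ) (h1 : p₁ ∈ Set.Icc (0 : ℝ) 1) (h2 : p₂ ∈ Set.Icc (0 : ℝ) 1) :
    (psiOp * ((4 : ℂ)⁻¹ • kpfChoi p₁ p₂)).trace
      = (((1 / 16) * (1 + 3 * (p₁ + p₂) - 6 * p₁ * p₂) : ℝ) : ℂ) :=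
  stmt14_general p₁ p₂

end
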